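/- Let Z, X, Y be finite types, let f : Z → X be an injective function, and let g : Z → Y be any function. Then the pushout X ⊔_Z Y of f and g in the category of types satisfies Nat.card (X ⊔_Z Y) + Nat.card Z = Nat.card X + Nat.card Y; equivalently, the pushout is finite of cardinality |X| − |Z| + |Y|. -/

import Mathlib

open CategoryTheory CategoryTheory.Limits

open Classical in
/-- Explicit description of the type-theoretic pushout along an injective map. -/
noncomputable def pushoutEquivAux {Z X Y : Type} (f : Z → X) (g : Z → Y)
    (hf : Function.Injective f) :
    Types.Pushout (TypeCat.ofHom f) (TypeCat.ofHom g) ≃ (((Set.range f)ᶜ : Set X) ⊕ Y) where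
  toFun := Quot.lift
    (Sum.elim
      (fun x => if h : x ∈ Set.range f then Sum.inr (g h.choose) else Sum.inl ⟨x, h⟩)
      Sum.inr)
    (by
      rintro _ _ ⟨s⟩
      have h : f s ∈ Set.range f := ⟨s, rfl⟩
      simp only [Sum.elim_inl, Sum.elim_inr, TypeCat.ofHom_apply, dif_pos h]
      exact congrArg (Sum.inr ∘ g) (hf h.choose_spec))
  invFun := Sum.elim (fun x => Quot.mk _ (Sum.inl x.1)) (fun y => Quot.mk _ (Sum.inr y))
  left_inv := by
    intro q
    induction q using Quot.ind with
    | _ x =>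
      cases x with
      | inl x =>
        by_cases h : x ∈ Set.range f
        · show Sum.elim _ _ (dite _ _ _) = _
          rw [dif_pos h]
          show Quot.mk _ (Sum.inr (g h.choose)) = Quot.mk _ (Sum.inl x)
          conv_rhs => rw [← h.choose_spec]
          exact (Quot.sound (Types.Pushout.Rel.inl_inr h.choose)).symm
        · show Sum.elim _ _ (dite _ _ _) = _
          rw [dif_neg h]
          rfl
      | inr y => rfl
  right_inv := by
    rintro (⟨x, hx⟩ | y)
    · exact dif_neg hx
    · rfl

/-- For finite types and an injective `f : Z → X`, the pushout `X ⊔_Z Y` in `Type` is finite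
with cardinality `|X| - |Z| + |Y|`, i.e. `|X ⊔_Z Y| + |Z| = |X| + |Y|`. -/
theorem card_pushout_of_injective {Z X Y : Type} [Finite Z] [Finite X] [Finite Y]
    (f : Z → X) (g : Z → Y) (hf : Function.Injective f) :
    Finite (pushout (TypeCat.ofHom f : Z ⟶ X) (TypeCat.ofHom g : Z ⟶ Y)) ∧
      Nat.card (pushout (TypeCat.ofHom f : Z ⟶ X) (TypeCat.ofHom g : Z ⟶ Y)) + Nat.card Z =
        Nat.card X + Nat.card Y := by
  let e₁ : pushout (TypeCat.ofHom f : Z ⟶ X) (TypeCat.ofHom g : Z ⟶ Y) ≃ Types.Pushout (TypeCat.ofHom f) (TypeCat.ofHom g) :=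
    ((colimit.isColimit _).coconePointUniqueUpToIso
      (Types.Pushout.isColimitCocone (TypeCat.ofHom f) (TypeCat.ofHom g))).toEquiv
  have e := e₁.trans (pushoutEquivAux f g hf)
  have hfin : Finite (pushout (TypeCat.ofHom f : Z ⟶ X) (TypeCat.ofHom g : Z ⟶ Y)) := Finite.of_equiv _ e.symm
  refine ⟨hfin, ?_⟩
  have h1 : Nat.card (pushout (TypeCat.ofHom f : Z ⟶ X) (TypeCat.ofHom g : Z ⟶ Y)) =
      Nat.card ((Set.range f)ᶜ : Set X) + Nat.card Y := by
    rw [Nat.card_congr e, Nat.card_sum]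
  have h2 : Nat.card ((Set.range f)ᶜ : Set X) + Nat.card (Set.range f) = Nat.card X := by
    rw [Nat.card_coe_set_eq, Nat.card_coe_set_eq, add_comm,
      Set.ncard_add_ncard_compl]
  have h3 : Nat.card (Set.range f) = Nat.card Z := Nat.card_range_of_injective hf
  omega
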